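/- arXiv:1105.1906 — 3 statements merged into one kernel-verified Lean document; each statement's English description precedes it below -/
import Mathlib

section
/- Let P_k denote the path on k vertices and let p ≥ 1 be an integer. Then C_{p,1}^T(P_k) ≤ 2p + 1. -/
open SimpleGraph

/-- A (p,1)-total labelling of `G`: adjacent vertices get distinct colors, edges sharing an
endpoint get distinct colors, and a vertex and an incident edge differ by at least `p`. -/
def IsPOneTotalLabelling {V : Type*} (G : SimpleGraph V) (p : ℕ)
    (cv : V → ℤ) (ce : G.edgeSet → ℤ) : Prop :=
  (∀ u v : V, G.Adj u v → cv u ≠ cv v) ∧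
  (∀ e f : G.edgeSet, e ≠ f → (∃ v : V, v ∈ (e : Sym2 V) ∧ v ∈ (f : Sym2 V)) → ce e ≠ ce f) ∧
  (∀ (v : V) (e : G.edgeSet), v ∈ (e : Sym2 V) → (p : ℤ) ≤ |cv v - ce e|)

/-- χ_{p,1}^T(G): least `k` such that `G` has a (p,1)-total labelling with colors in
`{0, …, k-1}`. -/
noncomputable def pOneTotalChromatic {V : Type*} (G : SimpleGraph V) (p : ℕ) : ℕ :=
  sInf {k : ℕ | ∃ cv ce, IsPOneTotalLabelling G p cv ce ∧
    (∀ v : V, cv v ∈ Set.Ico (0 : ℤ) k) ∧ (∀ e : G.edgeSet, ce e ∈ Set.Ico (0 : ℤ) k)}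

/-- λ_p^T(G): least `k` such that `G` has a (p,1)-total labelling with colors in `{0, …, k}`. -/
noncomputable def pOneTotalNumber {V : Type*} (G : SimpleGraph V) (p : ℕ) : ℕ :=
  sInf {k : ℕ | ∃ cv ce, IsPOneTotalLabelling G p cv ce ∧
    (∀ v : V, cv v ∈ Set.Icc (0 : ℤ) k) ∧ (∀ e : G.edgeSet, ce e ∈ Set.Icc (0 : ℤ) k)}

/-- `G` is `L`-(p,1)-total labelable for list assignment `(Lv, Le)`. -/
def ListPOneTotalLabelable {V : Type*} (G : SimpleGraph V) (p : ℕ)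
    (Lv : V → Finset ℤ) (Le : G.edgeSet → Finset ℤ) : Prop :=
  ∃ cv ce, IsPOneTotalLabelling G p cv ce ∧ (∀ v, cv v ∈ Lv v) ∧ (∀ e, ce e ∈ Le e)

/-- C_{p,1}^T(G): least `k` such that `G` is `L`-(p,1)-total labelable for every list
assignment whose lists all have size `k`. -/
noncomputable def pOneTotalChoosability {V : Type*} (G : SimpleGraph V) (p : ℕ) : ℕ :=
  sInf {k : ℕ | ∀ (Lv : V → Finset ℤ) (Le : G.edgeSet → Finset ℤ),
    (∀ v, (Lv v).card = k) → (∀ e, (Le e).card = k) → ListPOneTotalLabelable G p Lv Le}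

/-- An L(p,q)-labelling of `H`. -/
def IsLpqLabelling {V : Type*} (H : SimpleGraph V) (p q : ℕ) (f : V → ℤ) : Prop :=
  (∀ u v : V, H.Adj u v → (p : ℤ) ≤ |f u - f v|) ∧
  (∀ u v : V, H.dist u v = 2 → (q : ℤ) ≤ |f u - f v|)

/-- χ^{p,q}(H): least `k` such that `H` has an L(p,q)-labelling with colors in `{0, …, k-1}`. -/
noncomputable def LpqChromatic {V : Type*} (H : SimpleGraph V) (p q : ℕ) : ℕ :=
  sInf {k : ℕ | ∃ f, IsLpqLabelling H p q f ∧ ∀ v : V, f v ∈ Set.Ico (0 : ℤ) k}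

/-- χ_l^{p,q}(H): least `k` such that from every assignment of lists of size `k`, `H` has an
L(p,q)-labelling choosing each vertex's color from its list. -/
noncomputable def listLpqChromatic {V : Type*} (H : SimpleGraph V) (p q : ℕ) : ℕ :=
  sInf {k : ℕ | ∀ L : V → Finset ℤ, (∀ v, (L v).card = k) →
    ∃ f, IsLpqLabelling H p q f ∧ ∀ v : V, f v ∈ L v}

/-- The star `K_{1,n}`: vertex `0` is the center, adjacent to the `n` leaves. -/
def starGraph (n : ℕ) : SimpleGraph (Fin (n + 1)) :=
  SimpleGraph.fromRel (fun v w => v = 0 ∨ w = 0)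

/-- The incidence graph `S_I(G)`: replace every edge of `G` by a path of length 2. -/
def incidenceGraph {V : Type*} (G : SimpleGraph V) : SimpleGraph (V ⊕ G.edgeSet) where
  Adj x y :=
    (∃ (v : V) (e : G.edgeSet), x = Sum.inl v ∧ y = Sum.inr e ∧ v ∈ (e : Sym2 V)) ∨
    (∃ (v : V) (e : G.edgeSet), x = Sum.inr e ∧ y = Sum.inl v ∧ v ∈ (e : Sym2 V))
  symm := by
    constructor
    rintro x y (⟨v, e, rfl, rfl, h⟩ | ⟨v, e, rfl, rfl, h⟩)
    · exact Or.inr ⟨v, e, rfl, rfl, h⟩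
    · exact Or.inl ⟨v, e, rfl, rfl, h⟩
  loopless := by
    constructor
    rintro x (⟨v, e, h1, h2, -⟩ | ⟨v, e, h1, h2, -⟩) <;> subst h1 <;> simp at h2

/-- `H` is a minor of `G`: there are pairwise disjoint nonempty connected branch sets in `G`,
one for each vertex of `H`, with an edge of `G` between the branch sets of any two vertices
adjacent in `H`. -/
def IsGraphMinor {W V : Type*} (H : SimpleGraph W) (G : SimpleGraph V) : Prop :=
  ∃ B : W → Set V,
    (∀ w, (B w).Nonempty) ∧
    (∀ w, (G.induce (B w)).Connected) ∧
    (∀ w₁ w₂, w₁ ≠ w₂ → Disjoint (B w₁) (B w₂)) ∧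
    (∀ w₁ w₂, H.Adj w₁ w₂ → ∃ v₁ ∈ B w₁, ∃ v₂ ∈ B w₂, G.Adj v₁ v₂)

/-- A graph is outerplanar iff it has neither `K₄` nor `K_{2,3}` as a minor. -/
def Outerplanar {V : Type*} (G : SimpleGraph V) : Prop :=
  ¬ IsGraphMinor (completeGraph (Fin 4)) G ∧
  ¬ IsGraphMinor (completeBipartiteGraph (Fin 2) (Fin 3)) G

/-!
Order the vertices and edges of `P_k` as `v₀, v₀v₁, v₁, v₁v₂, …`, so that vertex `i` sits at
position `2i` and edge `{i, i+1}` at position `2i+1`. Then a (p,1)-total labelling is exactly a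
sequence whose consecutive terms differ by at least `p` and whose terms two apart are distinct.
Such a sequence can be chosen greedily from lists of size `2p+1`: each new term must avoid the
`2p-1` integers within distance `p-1` of its predecessor and one further value.
-/

open Function

lemma exists_mem_le_abs_sub_ne {p : ℕ} (hp : 1 ≤ p) {L : Finset ℤ} (hL : 2 * p < L.card)
    (a b : ℤ) : ∃ x ∈ L, (p : ℤ) ≤ |x - a| ∧ x ≠ b := by
  have hL_not_sub : ¬ L ⊆ insert b (Finset.Ioo (a - p) (a + p)) := fun h => by
    have := (Finset.card_le_card h).trans (Finset.card_insert_le _ _)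
    rw [Int.card_Ioo] at this
    omega
  obtain ⟨x, hxL, hx⟩ := Finset.not_subset.mp hL_not_sub
  simp only [Finset.mem_insert, Finset.mem_Ioo, not_or, not_and_or, not_lt] at hx
  exact ⟨x, hxL, le_abs.mpr (by omega), hx.1⟩

def secondOrderRec {α : Type*} (a b : α) (step : ℕ → α → α → α) : ℕ → α
  | 0 => a
  | 1 => b
  | n + 2 => step n (secondOrderRec a b step n) (secondOrderRec a b step (n + 1))

theorem exists_seq_mem_le_abs_sub_ne {p : ℕ} (hp : 1 ≤ p) (L : ℕ → Finset ℤ)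
    (hL : ∀ n, 2 * p < (L n).card) :
    ∃ f : ℕ → ℤ, (∀ n, f n ∈ L n) ∧ (∀ n, (p : ℤ) ≤ |f (n + 1) - f n|) ∧
      ∀ n, f (n + 2) ≠ f n := by
  choose next hnext using fun n a b => exists_mem_le_abs_sub_ne hp (hL n) a b
  set a := next 0 0 0
  refine ⟨secondOrderRec a (next 1 a a) fun n x y => next (n + 2) y x, ?_, ?_, fun n => ?_⟩
  · rintro (_ | _ | n)
    exacts [(hnext _ _ _).1, (hnext _ _ _).1, (hnext _ _ _).1]
  · rintro (_ | n)
    exacts [(hnext _ _ _).2.1, (hnext _ _ _).2.1]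
  · exact (hnext _ _ _).2.2

theorem exists_seq_comp_mem_le_abs_sub_ne {X : Type*} {pos : X → ℕ} (hpos : Injective pos)
    {p : ℕ} (hp : 1 ≤ p) (L : X → Finset ℤ) (hL : ∀ x, 2 * p < (L x).card) :
    ∃ f : ℕ → ℤ, (∀ x, f (pos x) ∈ L x) ∧ (∀ n, (p : ℤ) ≤ |f (n + 1) - f n|) ∧
      ∀ n, f (n + 2) ≠ f n := by
  have hcard : ∀ n, 2 * p < (extend pos L (fun _ => Finset.Icc 0 (2 * p : ℤ)) n).card := by
    intro n
    by_cases hn : ∃ x, pos x = n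
    · obtain ⟨x, rfl⟩ := hn
      simpa only [hpos.extend_apply] using hL x
    · rw [extend_apply' _ _ _ hn, Int.card_Icc]
      omega
  obtain ⟨f, hmem, hfar, hne⟩ := exists_seq_mem_le_abs_sub_ne hp _ hcard
  exact ⟨f, fun x => hpos.extend_apply L _ x ▸ hmem (pos x), hfar, hne⟩

namespace SimpleGraph

def pathTotalPos (k : ℕ) : Fin k ⊕ (pathGraph k).edgeSet → ℕ :=
  Sum.elim (fun v => 2 * v) fun e =>
    Sym2.lift ⟨fun u v : Fin k => (u : ℕ) + v, fun _ _ => add_comm _ _⟩ (e : Sym2 (Fin k))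

@[simp]
lemma pathTotalPos_inl {k : ℕ} (v : Fin k) : pathTotalPos k (.inl v) = 2 * v := rfl

lemma pathGraph_exists_edge_eq {k : ℕ} (e : (pathGraph k).edgeSet) :
    ∃ i j : Fin k, (i : ℕ) + 1 = j ∧ (e : Sym2 (Fin k)) = s(i, j) := by
  obtain ⟨e, he⟩ := e
  induction e using Sym2.ind with
  | _ u v =>
    rcases pathGraph_adj.mp he with h | h
    · exact ⟨u, v, h, rfl⟩
    · exact ⟨v, u, h, Sym2.eq_swap⟩

lemma pathTotalPos_inr {k : ℕ} (e : (pathGraph k).edgeSet) :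
    ∃ i j : Fin k, (i : ℕ) + 1 = j ∧ (e : Sym2 (Fin k)) = s(i, j) ∧
      pathTotalPos k (.inr e) = 2 * i + 1 := by
  obtain ⟨i, j, hij, he⟩ := pathGraph_exists_edge_eq e
  refine ⟨i, j, hij, he, ?_⟩
  simp only [pathTotalPos, Sum.elim_inr, he, Sym2.lift_mk]
  omega

lemma pathTotalPos_injective (k : ℕ) : Injective (pathTotalPos k) := by
  rintro (u | e) (v | f) h
  · simp only [pathTotalPos_inl] at h
    exact congrArg _ (Fin.ext (by omega))
  · obtain ⟨i, j, -, -, hf⟩ := pathTotalPos_inr f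
    simp only [pathTotalPos_inl] at h hf
    omega
  · obtain ⟨i, j, -, -, he⟩ := pathTotalPos_inr e
    simp only [pathTotalPos_inl] at h he
    omega
  · obtain ⟨i, j, hij, he, hpe⟩ := pathTotalPos_inr e
    obtain ⟨i', j', hij', hf, hpf⟩ := pathTotalPos_inr f
    have hi : i = i' := Fin.ext (by omega)
    have hj : j = j' := Fin.ext (by omega)
    exact congrArg _ (Subtype.ext (by rw [he, hf, hi, hj]))

lemma pathTotalPos_of_mem {k : ℕ} {v : Fin k} {e : (pathGraph k).edgeSet}
    (hv : v ∈ (e : Sym2 (Fin k))) :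
    pathTotalPos k (.inr e) = 2 * v + 1 ∨ pathTotalPos k (.inr e) + 1 = 2 * v := by
  obtain ⟨i, j, hij, he, hpos⟩ := pathTotalPos_inr e
  rw [he, Sym2.mem_iff] at hv
  rcases hv with rfl | rfl <;> omega

theorem isPOneTotalLabelling_pathGraph_of_seq {k p : ℕ} {f : ℕ → ℤ}
    (hfar : ∀ n, (p : ℤ) ≤ |f (n + 1) - f n|) (hne : ∀ n, f (n + 2) ≠ f n) :
    IsPOneTotalLabelling (pathGraph k) p (fun v => f (pathTotalPos k (.inl v)))
      (fun e => f (pathTotalPos k (.inr e))) := by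
  refine ⟨fun u v huv => ?_, fun e e' hee' ⟨v, hve, hve'⟩ => ?_, fun v e hv => ?_⟩ <;>
    simp only [pathTotalPos_inl]
  · rcases pathGraph_adj.mp huv with h | h
    · rw [← h, mul_add]
      exact (hne _).symm
    · rw [← h, mul_add]
      exact hne _
  · have hpos : pathTotalPos k (.inr e) ≠ pathTotalPos k (.inr e') :=
      fun h => hee' (Sum.inr_injective (pathTotalPos_injective k h))
    obtain h | h : pathTotalPos k (.inr e) = pathTotalPos k (.inr e') + 2 ∨
        pathTotalPos k (.inr e') = pathTotalPos k (.inr e) + 2 := by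
      rcases pathTotalPos_of_mem hve with h | h <;> rcases pathTotalPos_of_mem hve' with h' | h' <;>
        omega
    · rw [h]
      exact hne _
    · rw [h]
      exact (hne _).symm
  · rcases pathTotalPos_of_mem hv with h | h
    · rw [h, abs_sub_comm]
      exact hfar _
    · rw [← h]
      exact hfar _

end SimpleGraph

/-- C_{p,1}^T(P_k) ≤ 2p + 1. -/
theorem pOneTotalChoosability_pathGraph_le (p k : ℕ) (hp : 1 ≤ p) :
    pOneTotalChoosability (SimpleGraph.pathGraph k) p ≤ 2 * p + 1 := by
  refine Nat.sInf_le fun Lv Le hLv hLe => ?_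
  obtain ⟨f, hmem, hfar, hne⟩ := exists_seq_comp_mem_le_abs_sub_ne (pathTotalPos_injective k) hp
    (Sum.elim Lv Le) (by rintro (v | e) <;> simp [hLv, hLe])
  exact ⟨_, _, isPOneTotalLabelling_pathGraph_of_seq hfar hne, fun v => hmem (.inl v),
    fun e => hmem (.inr e)⟩
end

section
/- Let K_{1,n} be the star with n ≥ 1 leaves and let p ≥ 1 be an integer. Then χ_{p,1}^T(K_{1,n}) = n + p if p < n, and χ_{p,1}^T(K_{1,n}) = n + p + 1 if p ≥ n. -/
open SimpleGraph

/-!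
The `n` spokes need pairwise distinct colours, each at distance at least `p` from the centre
colour `x`. If `x ∈ [0, k)` and `p ≥ 1`, the window `(x - p, x + p)` removes at least `p` colours
of `[0, k)`, so `k ≥ n + p`; for `p < n` this is attained with centre `0`, spokes `p, …, n + p - 1`
and each leaf `p` below its spoke, except the first leaf, coloured `2p`. For `n ≤ p` and `k = n + p`
the count is tight only when `x` is `0` or `n + p - 1`; then some spoke is coloured `x ± p` and its
leaf has no admissible colour.
-/

open Finset Function

section FarColors

/-- Contains the colours of `[0, k)` at distance at least `p` from `x`, as two intervals whose
sizes are easy to count. -/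
noncomputable def farColors (k p x : ℤ) : Finset ℤ :=
  Ico 0 (x - p + 1) ∪ Ico (x + p) k

variable {k p x : ℤ}

lemma mem_farColors_of {c : ℤ} (hc : c ∈ Set.Ico 0 k) (hfar : p ≤ |x - c|) :
    c ∈ farColors k p x := by
  simp only [farColors, mem_union, mem_Ico]
  rw [Set.mem_Ico] at hc
  rcases abs_cases (x - c) with ⟨h, -⟩ | ⟨h, -⟩ <;> omega

lemma card_farColors_le : #(farColors k p x) ≤ (x - p + 1).toNat + (k - x - p).toNat := by
  calc #(farColors k p x) ≤ #(Ico 0 (x - p + 1)) + #(Ico (x + p) k) := card_union_le _ _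
    _ = (x - p + 1).toNat + (k - x - p).toNat := by rw [Int.card_Ico, Int.card_Ico]; ring_nf

variable {ι : Type*} [Fintype ι] {z : ι → ℤ}

lemma card_le_card_farColors (hz : Injective z) (hzk : ∀ i, z i ∈ Set.Ico 0 k)
    (hfar : ∀ i, p ≤ |x - z i|) : Fintype.card ι ≤ #(farColors k p x) :=
  card_le_card_of_injOn z (fun i _ => mem_farColors_of (hzk i) (hfar i)) hz.injOn

lemma exists_eq_of_card_farColors_le (hz : Injective z) (hzk : ∀ i, z i ∈ Set.Ico 0 k)
    (hfar : ∀ i, p ≤ |x - z i|) (hcard : #(farColors k p x) ≤ Fintype.card ι) {c : ℤ}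
    (hc : c ∈ farColors k p x) : ∃ i, z i = c := by
  obtain ⟨i, -, hi⟩ := surjOn_of_injOn_of_card_le z
    (fun i _ => mem_farColors_of (hzk i) (hfar i)) hz.injOn hcard hc
  exact ⟨i, hi⟩

end FarColors

def HasPOneTotalLabellingIn {V : Type*} (G : SimpleGraph V) (p k : ℕ) : Prop :=
  ∃ cv ce, IsPOneTotalLabelling G p cv ce ∧
    (∀ v, cv v ∈ Set.Ico (0 : ℤ) k) ∧ ∀ e, ce e ∈ Set.Ico (0 : ℤ) k

lemma pOneTotalChromatic_eq_of {V : Type*} {G : SimpleGraph V} {p k : ℕ}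
    (hk : HasPOneTotalLabellingIn G p k) (hmin : ∀ m, HasPOneTotalLabellingIn G p m → k ≤ m) :
    pOneTotalChromatic G p = k :=
  le_antisymm (Nat.sInf_le hk) (le_csInf ⟨k, hk⟩ hmin)

namespace starGraph

variable {n : ℕ}

lemma adj_iff {v w : Fin (n + 1)} :
    (_root_.starGraph n).Adj v w ↔ v ≠ w ∧ (v = 0 ∨ w = 0) := by
  simp only [_root_.starGraph, fromRel_adj]
  tauto

lemma adj_zero_succ (j : Fin n) : (_root_.starGraph n).Adj 0 j.succ :=
  adj_iff.2 ⟨(Fin.succ_ne_zero j).symm, Or.inl rfl⟩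

lemma spoke_bijective :
    Bijective fun j : Fin n =>
      (⟨s(0, j.succ), adj_zero_succ j⟩ : (_root_.starGraph n).edgeSet) := by
  refine ⟨fun i j hij => Fin.succ_injective _ (Sym2.congr_right.1 (Subtype.ext_iff.1 hij)), ?_⟩
  rintro ⟨e, he⟩
  induction e using Sym2.ind with
  | _ v w =>
    obtain ⟨hvw, rfl | rfl⟩ := adj_iff.1 he
    · obtain ⟨j, rfl⟩ := Fin.exists_succ_eq.2 hvw.symm
      exact ⟨j, rfl⟩
    · obtain ⟨j, rfl⟩ := Fin.exists_succ_eq.2 hvw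
      exact ⟨j, Subtype.ext Sym2.eq_swap⟩

noncomputable def spoke (n : ℕ) : Fin n ≃ (_root_.starGraph n).edgeSet :=
  Equiv.ofBijective _ spoke_bijective

@[simp]
lemma coe_spoke (j : Fin n) : (spoke n j : Sym2 (Fin (n + 1))) = s(0, j.succ) := rfl

lemma mem_spoke_iff {v : Fin (n + 1)} {j : Fin n} :
    v ∈ (spoke n j : Sym2 _) ↔ v = 0 ∨ v = j.succ := by
  rw [coe_spoke, Sym2.mem_iff]

variable {p : ℕ} {cv : Fin (n + 1) → ℤ} {ce : (_root_.starGraph n).edgeSet → ℤ}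

lemma isPOneTotalLabelling_iff :
    IsPOneTotalLabelling (_root_.starGraph n) p cv ce ↔
      (∀ j : Fin n, cv j.succ ≠ cv 0) ∧ Injective (ce ∘ spoke n) ∧
        ∀ j, (p : ℤ) ≤ |cv 0 - ce (spoke n j)| ∧ (p : ℤ) ≤ |cv j.succ - ce (spoke n j)| := by
  constructor
  · rintro ⟨hv, he, hve⟩
    refine ⟨fun j => (hv _ _ (adj_zero_succ j)).symm, fun i j hij => ?_, fun j =>
      ⟨hve _ _ (mem_spoke_iff.2 (Or.inl rfl)), hve _ _ (mem_spoke_iff.2 (Or.inr rfl))⟩⟩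
    by_contra hne
    exact he _ _ ((spoke n).injective.ne hne)
      ⟨0, mem_spoke_iff.2 (Or.inl rfl), mem_spoke_iff.2 (Or.inl rfl)⟩ hij
  · rintro ⟨hv, he, hve⟩
    refine ⟨fun u w huw => ?_, fun e f hef _ => ?_, fun v e hve' => ?_⟩
    · obtain ⟨hne, rfl | rfl⟩ := adj_iff.1 huw
      · obtain ⟨j, rfl⟩ := Fin.exists_succ_eq.2 hne.symm
        exact (hv j).symm
      · obtain ⟨j, rfl⟩ := Fin.exists_succ_eq.2 hne
        exact hv j
    · obtain ⟨i, rfl⟩ := (spoke n).surjective e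
      obtain ⟨j, rfl⟩ := (spoke n).surjective f
      exact he.ne (fun h => hef (congrArg _ h))
    · obtain ⟨j, rfl⟩ := (spoke n).surjective e
      rcases mem_spoke_iff.1 hve' with rfl | rfl
      exacts [(hve j).1, (hve j).2]

lemma hasPOneTotalLabellingIn_of {k : ℕ} (x : ℤ) (y z : Fin n → ℤ) (hy : ∀ j, y j ≠ x)
    (hz : Injective z) (hfar : ∀ j, (p : ℤ) ≤ |x - z j| ∧ (p : ℤ) ≤ |y j - z j|)
    (hx : x ∈ Set.Ico (0 : ℤ) k) (hyk : ∀ j, y j ∈ Set.Ico (0 : ℤ) k)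
    (hzk : ∀ j, z j ∈ Set.Ico (0 : ℤ) k) :
    HasPOneTotalLabellingIn (_root_.starGraph n) p k :=
  ⟨Fin.cons x y, z ∘ (spoke n).symm,
    isPOneTotalLabelling_iff.2 ⟨by simpa using hy, by simpa using hz, by simpa using hfar⟩,
    Fin.cases hx hyk, fun _ => hzk _⟩

lemma hasPOneTotalLabellingIn_add_of_lt (hp : 1 ≤ p) (hpn : p < n) :
    HasPOneTotalLabellingIn (_root_.starGraph n) p (n + p) := by
  refine hasPOneTotalLabellingIn_of 0 (fun j => if (j : ℕ) = 0 then 2 * p else j)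
    (fun j => p + j) (fun j => ?_) (fun i j hij => Fin.ext (by simpa using hij)) (fun j => ⟨?_, ?_⟩)
    (by simp; omega) (fun j => ?_) (fun j => ?_) <;> have := j.isLt
  · split_ifs <;> omega
  · rw [le_abs]; omega
  · split_ifs <;> rw [le_abs] <;> omega
  · simp only [Set.mem_Ico]; split_ifs <;> omega
  · simp only [Set.mem_Ico]; omega

lemma hasPOneTotalLabellingIn_add_add_one :
    HasPOneTotalLabellingIn (_root_.starGraph n) p (n + p + 1) := by
  refine hasPOneTotalLabellingIn_of 0 (fun j => j + 1) (fun j => p + j + 1) (fun j => ?_)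
    (fun i j hij => Fin.ext (by simpa using hij)) (fun j => ⟨?_, ?_⟩)
    (by simp; omega) (fun j => ?_) (fun j => ?_) <;> have := j.isLt
  · omega
  · rw [le_abs]; omega
  · rw [le_abs]; omega
  · simp only [Set.mem_Ico]; omega
  · simp only [Set.mem_Ico]; omega

lemma add_le_of_hasPOneTotalLabellingIn (hn : 1 ≤ n) (hp : 1 ≤ p) {m : ℕ}
    (h : HasPOneTotalLabellingIn (_root_.starGraph n) p m) : n + p ≤ m := by
  obtain ⟨cv, ce, hl, hv, he⟩ := h
  obtain ⟨-, hinj, hfar⟩ := isPOneTotalLabelling_iff.1 hl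
  have hcount := (card_le_card_farColors hinj (fun j => he _) (fun j => (hfar j).1)).trans
    card_farColors_le
  have hx := hv 0
  rw [Fintype.card_fin] at hcount
  rw [Set.mem_Ico] at hx
  omega

lemma not_hasPOneTotalLabellingIn_add (hn : 1 ≤ n) (hnp : n ≤ p) :
    ¬ HasPOneTotalLabellingIn (_root_.starGraph n) p (n + p) := by
  rintro ⟨cv, ce, hl, hv, he⟩
  obtain ⟨hleaf, hinj, hfar⟩ := isPOneTotalLabelling_iff.1 hl
  have hcount := (card_le_card_farColors hinj (fun j => he _) (fun j => (hfar j).1)).trans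
    card_farColors_le
  have hx := hv 0
  rw [Fintype.card_fin] at hcount
  rw [Set.mem_Ico] at hx
  -- the counting bound is tight, which forces the centre colour to an end of the range
  have hext : cv 0 = 0 ∨ cv 0 = n + p - 1 := by omega
  obtain ⟨c, hc, hxc⟩ : ∃ c ∈ farColors (n + p : ℕ) p (cv 0), |cv 0 - c| = p := by
    simp only [farColors, mem_union, mem_Ico]
    rcases hext with h | h
    · exact ⟨p, by omega, by simp [h]⟩
    · exact ⟨n - 1, by omega, by rw [h, abs_of_nonneg (by omega)]; ring⟩
  obtain ⟨j, hj⟩ := exists_eq_of_card_farColors_le hinj (fun j => he _) (fun j => (hfar j).1)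
    (card_farColors_le.trans (by rw [Fintype.card_fin]; omega)) hc
  rw [comp_apply] at hj
  subst hj
  have hleaf_far := le_abs.1 (hfar j).2
  have hy := hv j.succ
  have hcol := he (spoke n j)
  have hy0 := hleaf j
  rw [Set.mem_Ico] at hy hcol
  rcases abs_cases (cv 0 - ce (spoke n j)) with ⟨h, -⟩ | ⟨h, -⟩ <;> omega

end starGraph

/-- χ_{p,1}^T(K_{1,n}) = n + p if p < n, and = n + p + 1 if p ≥ n. -/
theorem pOneTotalChromatic_starGraph (n p : ℕ) (hn : 1 ≤ n) (hp : 1 ≤ p) :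
    (p < n → pOneTotalChromatic (_root_.starGraph n) p = n + p) ∧
    (n ≤ p → pOneTotalChromatic (_root_.starGraph n) p = n + p + 1) := by
  refine ⟨fun hpn => ?_, fun hnp => ?_⟩
  · exact pOneTotalChromatic_eq_of (starGraph.hasPOneTotalLabellingIn_add_of_lt hp hpn)
      fun m => starGraph.add_le_of_hasPOneTotalLabellingIn hn hp
  · refine pOneTotalChromatic_eq_of starGraph.hasPOneTotalLabellingIn_add_add_one fun m hm => ?_
    have hle := starGraph.add_le_of_hasPOneTotalLabellingIn hn hp hm
    have hne : m ≠ n + p := by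
      rintro rfl
      exact starGraph.not_hasPOneTotalLabellingIn_add hn hnp hm
    omega
end

section
/- Let T be a finite tree (a connected acyclic simple graph) with maximum degree Δ and let p be an integer with 1 ≤ p ≤ Δ. If there exists a vertex v of T such that v and all of its neighbors have degree Δ, then χ_l^{p,1}(T) = Δ + 2p − 1. -/
open SimpleGraph

/-
Labels of adjacent vertices must differ by at least `p`, and since `p ≥ 1` an L(p,1)-labelling is
the same as such a labelling that is injective on every neighbourhood.

Upper bound: delete a leaf `v₀` of the tree, label the rest by induction, and give `v₀` a label
from its list avoiding the `2p - 1` labels within distance `< p` of the label of its neighbour `w`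
and the at most `Δ - 1` labels of the other neighbours of `w`.

Lower bound: with labels in `{0, …, Δ + 2p - 3}`, a vertex of degree `Δ` labelled in the middle
band `[p - 1, Δ + p - 2]` would have its `Δ` distinct neighbour labels among only `Δ - 1` values.
So `v` and its neighbours are labelled in the two end bands of `p - 1 < Δ` values each, adjacent
vertices in opposite bands, and the `Δ` neighbours of `v` do not fit into one band.
-/

lemma Finset.exists_mem_notMem_le_abs_sub {L B : Finset ℤ} {a : ℤ} {p : ℕ}
    (h : B.card + (2 * p - 1) < L.card) : ∃ c ∈ L, c ∉ B ∧ (p : ℤ) ≤ |c - a| := by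
  obtain ⟨c, hcL, hc⟩ := Finset.exists_mem_notMem_of_card_lt_card
    (s := B ∪ Finset.Ioo (a - p) (a + p)) (t := L) <| by
      have := Finset.card_union_le B (Finset.Ioo (a - p) (a + p))
      rw [Int.card_Ioo] at this
      omega
  simp only [Finset.mem_union, Finset.mem_Ioo, not_or, not_and_or, not_lt] at hc
  refine ⟨c, hcL, hc.1, ?_⟩
  rcases abs_cases (c - a) with ⟨_, _⟩ | ⟨_, _⟩ <;> omega

namespace SimpleGraph

variable {V : Type*} {G : SimpleGraph V}

lemma dist_eq_two_iff {u v : V} :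
    G.dist u v = 2 ↔ u ≠ v ∧ ¬ G.Adj u v ∧ (G.commonNeighbors u v).Nonempty := by
  rw [dist, ENat.toNat_eq_iff two_ne_zero]
  exact edist_eq_two_iff

lemma degree_induce_le [Fintype V] [DecidableRel G.Adj] (s : Set V) (v : s)
    [Fintype ((G.induce s).neighborSet v)] : (G.induce s).degree v ≤ G.degree v := by
  simp only [← card_neighborFinset_eq_degree]
  exact Finset.card_le_card_of_injOn Subtype.val (fun u hu => by simpa using hu)
    Subtype.val_injective.injOn

lemma isLpqLabelling_one_iff {p : ℕ} (hp : 1 ≤ p) {f : V → ℤ} :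
    IsLpqLabelling G p 1 f ↔
      (∀ u v, G.Adj u v → (p : ℤ) ≤ |f u - f v|) ∧
        ∀ w, Set.InjOn f (G.neighborSet w) := by
  refine ⟨fun ⟨hadj, hdist⟩ => ⟨hadj, fun w u hu x hx hux => ?_⟩,
    fun ⟨hadj, hinj⟩ => ⟨hadj, fun u v huv => ?_⟩⟩
  · by_contra hne
    by_cases h : G.Adj u x
    · have := hadj u x h
      rw [hux, sub_self, abs_zero] at this
      omega
    · have := hdist u x (dist_eq_two_iff.mpr ⟨hne, h, w, hu.symm, hx.symm⟩)
      rw [hux, sub_self, abs_zero] at this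
      omega
  · obtain ⟨hne, -, w, hu, hv⟩ := dist_eq_two_iff.mp huv
    have : f u ≠ f v := fun h => hne (hinj w hu.symm hv.symm h)
    exact_mod_cast Int.one_le_abs (sub_ne_zero.mpr this)

lemma isLpqLabelling_of_subsingleton [Subsingleton V] (p q : ℕ) (f : V → ℤ) :
    IsLpqLabelling G p q f :=
  ⟨fun u v h => absurd (Subsingleton.elim u v) h.ne,
    fun u v h => by simp [Subsingleton.elim u v] at h⟩

lemma IsLpqLabelling.degree_le_card {p : ℕ} (hp : 1 ≤ p) {f : V → ℤ}
    (hf : IsLpqLabelling G p 1 f) {v : V} [Fintype (G.neighborSet v)] {S : Finset ℤ}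
    (hS : ∀ u, G.Adj v u → f u ∈ S) :
    G.degree v ≤ S.card := by
  rw [← card_neighborFinset_eq_degree]
  refine Finset.card_le_card_of_injOn f (fun u hu => hS u (by simpa using hu)) ?_
  simpa using ((isLpqLabelling_one_iff hp).mp hf).2 v

lemma IsLpqLabelling.lt_or_le_of_mem_Ico {p d : ℕ} (hp : 1 ≤ p) {f : V → ℤ}
    (hf : IsLpqLabelling G p 1 f) (hrange : ∀ x, f x ∈ Set.Ico (0 : ℤ) (d + 2 * p - 2))
    {w : V} [Fintype (G.neighborSet w)] (hw : G.degree w = d) :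
    f w < p - 1 ∨ d + p - 1 ≤ f w := by
  by_contra! hmid
  have hS : ∀ u, G.Adj w u →
      f u ∈ Finset.Ico 0 (f w - p + 1) ∪ Finset.Ico (f w + p) (d + 2 * p - 2) := by
    intro u hu
    have := hf.1 w u hu
    have := hrange u
    simp only [Set.mem_Ico] at this
    simp only [Finset.mem_union, Finset.mem_Ico]
    rcases abs_cases (f w - f u) with ⟨_, _⟩ | ⟨_, _⟩ <;> omega
  have := (hf.degree_le_card hp hS).trans (Finset.card_union_le _ _)
  rw [Int.card_Ico, Int.card_Ico] at this
  omega

lemma not_exists_isLpqLabelling_mem_Ico [G.LocallyFinite] {p d : ℕ} (hp : 1 ≤ p) (hpd : p ≤ d)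
    {v : V} (hv : G.degree v = d) (hnb : ∀ u, G.Adj v u → G.degree u = d) :
    ¬ ∃ f, IsLpqLabelling G p 1 f ∧ ∀ x, f x ∈ Set.Ico (0 : ℤ) (d + 2 * p - 2) := by
  rintro ⟨f, hf, hrange⟩
  have hband := fun {x} (hx : G.degree x = d) => hf.lt_or_le_of_mem_Ico hp hrange hx
  have hsep := fun {u} (hu : G.Adj v u) => hf.1 v u hu
  have := hrange v
  simp only [Set.mem_Ico] at this
  have := hf.degree_le_card hp
    (S := Finset.Ico (if f v < p - 1 then (d + p - 1 : ℤ) else 0)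
      ((if f v < p - 1 then (d + p - 1 : ℤ) else 0) + (p - 1))) fun u hu => by
    have := hsep hu
    have := hrange u
    simp only [Set.mem_Ico] at this
    rw [Finset.mem_Ico]
    split_ifs <;> rcases hband hv with _ | _ <;> rcases hband (hnb u hu) with _ | _ <;>
      rcases abs_cases (f v - f u) with ⟨_, _⟩ | ⟨_, _⟩ <;> omega
  rw [Int.card_Ico, add_sub_cancel_left] at this
  omega

lemma isLpqLabelling_update_of_leaf [DecidableEq V] {p : ℕ} (hp : 1 ≤ p) {v₀ w : V}
    (hleaf : ∀ x, G.Adj v₀ x ↔ x = w) {g : V → ℤ}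
    (hg : IsLpqLabelling (G.induce {v₀}ᶜ) p 1 fun x => g x) {c : ℤ}
    (hcw : (p : ℤ) ≤ |c - g w|) (hc : ∀ x, x ≠ v₀ → G.Adj w x → g x ≠ c) :
    IsLpqLabelling G p 1 (Function.update g v₀ c) := by
  rw [isLpqLabelling_one_iff hp] at hg ⊢
  obtain ⟨hsep, hinj⟩ := hg
  have hwv₀ : w ≠ v₀ := ((hleaf w).mpr rfl).ne'
  refine ⟨fun a b hab => ?_, fun x a hxa b hxb hab => ?_⟩
  · by_cases ha : a = v₀
    · subst ha
      obtain rfl := (hleaf b).mp hab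
      simpa [hwv₀] using hcw
    by_cases hb : b = v₀
    · subst hb
      obtain rfl := (hleaf a).mp hab.symm
      simpa [hwv₀, abs_sub_comm] using hcw
    simpa [ha, hb] using hsep ⟨a, ha⟩ ⟨b, hb⟩ (by simpa using hab)
  by_cases hx : x = v₀
  · subst hx
    exact ((hleaf a).mp hxa).trans ((hleaf b).mp hxb).symm
  by_cases ha : a = v₀ <;> by_cases hb : b = v₀
  · exact ha.trans hb.symm
  · subst ha
    obtain rfl := (hleaf x).mp hxa.symm
    exact absurd (by simpa [hb] using hab.symm) (hc b hb hxb)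
  · subst hb
    obtain rfl := (hleaf x).mp hxb.symm
    exact absurd (by simpa [ha] using hab) (hc a ha hxa)
  · have := hinj ⟨x, hx⟩ (x₁ := ⟨a, ha⟩) (by simpa using hxa) (x₂ := ⟨b, hb⟩)
      (by simpa using hxb) (by simpa [ha, hb] using hab)
    exact congrArg Subtype.val this

theorem IsTree.exists_isLpqLabelling_mem [Fintype V] {T : SimpleGraph V}
    [DecidableRel T.Adj] (hT : T.IsTree) {p d : ℕ} (hp : 1 ≤ p) (hdeg : ∀ v, T.degree v ≤ d)
    (L : V → Finset ℤ) (hL : ∀ v, d + 2 * p - 1 ≤ (L v).card) :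
    ∃ f, IsLpqLabelling T p 1 f ∧ ∀ v, f v ∈ L v := by
  classical
  induction hn : Fintype.card V generalizing V with
  | zero => exact absurd hn (Fintype.card_pos_iff.mpr hT.connected.nonempty).ne'
  | succ n ih =>
  rcases subsingleton_or_nontrivial V with hV | hV
  · choose f hf using fun v => Finset.card_pos.mp (by have := hL v; omega : 0 < (L v).card)
    exact ⟨f, isLpqLabelling_of_subsingleton p 1 f, hf⟩
  obtain ⟨v₀, hv₀⟩ := hT.exists_vert_degree_one_of_nontrivial
  obtain ⟨w, hw, hw_uniq⟩ := degree_eq_one_iff_existsUnique_adj.mp hv₀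
  have hleaf : ∀ x, T.Adj v₀ x ↔ x = w := fun x => ⟨hw_uniq x, by rintro rfl; exact hw⟩
  obtain ⟨f', hf', hf'L⟩ := ih (V := ({v₀}ᶜ : Set V))
    ⟨hT.connected.induce_compl_singleton_of_degree_eq_one hv₀, hT.isAcyclic.induce _⟩
    (fun x => (degree_induce_le _ x).trans (hdeg x)) (fun x => L x) (fun x => hL x)
    (by rw [Fintype.card_compl_set, hn]; simp)
  let g : V → ℤ := fun x => if h : x = v₀ then 0 else f' ⟨x, h⟩
  have hwdeg : ((T.neighborFinset w).erase v₀).card + 1 ≤ d := by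
    rw [Finset.card_erase_of_mem (by simpa using hw.symm), card_neighborFinset_eq_degree]
    have := hdeg w
    have := (T.degree_pos_iff_exists_adj w).mpr ⟨v₀, hw.symm⟩
    omega
  obtain ⟨c, hcL, hcB, hcw⟩ := Finset.exists_mem_notMem_le_abs_sub (L := L v₀) (p := p)
    (a := g w) (B := ((T.neighborFinset w).erase v₀).image g)
    (by have := hL v₀; have := ((T.neighborFinset w).erase v₀).card_image_le (f := g); omega)
  refine ⟨Function.update g v₀ c, ?_, fun x => ?_⟩
  · refine isLpqLabelling_update_of_leaf hp hleaf ?_ hcw fun x hx hwx hgx => ?_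
    · convert hf' with x
      exact dif_neg x.2
    · exact hcB (Finset.mem_image.mpr ⟨x, by simpa [hx] using hwx, hgx⟩)
  · by_cases hx : x = v₀
    · simpa [hx] using hcL
    · simpa [hx, g] using hf'L ⟨x, hx⟩

lemma listLpqChromatic_eq_succ {p q k : ℕ}
    (hlist : ∀ L : V → Finset ℤ, (∀ v, k + 1 ≤ (L v).card) →
      ∃ f, IsLpqLabelling G p q f ∧ ∀ v, f v ∈ L v)
    (hrange : ¬ ∃ f, IsLpqLabelling G p q f ∧ ∀ v, f v ∈ Set.Ico (0 : ℤ) k) :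
    listLpqChromatic G p q = k + 1 := by
  have hmem : k + 1 ∈ {k : ℕ | ∀ L : V → Finset ℤ, (∀ v, (L v).card = k) →
      ∃ f, IsLpqLabelling G p q f ∧ ∀ v : V, f v ∈ L v} :=
    fun L hL => hlist L fun v => (hL v).ge
  refine le_antisymm (Nat.sInf_le hmem) (le_csInf ⟨_, hmem⟩ fun m hm => ?_)
  by_contra! hmk
  obtain ⟨f, hf, hfL⟩ := hm (fun _ => Finset.Ico 0 m) fun _ => by simp
  refine hrange ⟨f, hf, fun v => ?_⟩
  have := hfL v
  simp only [Finset.mem_Ico, Set.mem_Ico] at this ⊢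
  omega

end SimpleGraph

/-- if T is a tree with maximum degree Δ, 1 ≤ p ≤ Δ, and some vertex v and all
its neighbors have degree Δ, then χ_l^{p,1}(T) = Δ + 2p − 1. -/
theorem listLpqChromatic_tree_eq {V : Type*} [Fintype V] (T : SimpleGraph V)
    [DecidableRel T.Adj] (hT : T.IsTree) (p : ℕ) (hp : 1 ≤ p) (hpΔ : p ≤ T.maxDegree)
    (hv : ∃ v : V, T.degree v = T.maxDegree ∧
      ∀ u : V, T.Adj v u → T.degree u = T.maxDegree) :
    listLpqChromatic T p 1 = T.maxDegree + 2 * p - 1 := by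
  obtain ⟨v, hv, hnb⟩ := hv
  rw [show T.maxDegree + 2 * p - 1 = (T.maxDegree + 2 * p - 2) + 1 by omega]
  refine listLpqChromatic_eq_succ (fun L hL => hT.exists_isLpqLabelling_mem hp
    T.degree_le_maxDegree L fun v => by have := hL v; omega) ?_
  rw [show ((T.maxDegree + 2 * p - 2 : ℕ) : ℤ) = T.maxDegree + 2 * p - 2 by omega]
  exact not_exists_isLpqLabelling_mem_Ico hp hpΔ hv hnb
end
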